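/- Soundness of LBiI: every sequent Γ ⊢ Δ derivable in LBiI (including its cut rule) is valid in the Kripke semantics of BiInt. -/
import Mathlib


/-- BiInt formulas -/
inductive Form : Type
  | atom : ℕ → Form
  | top  : Form
  | bot  : Form
  | and  : Form → Form → Form
  | or   : Form → Form → Form
  | imp  : Form → Form → Form
  | excl : Form → Form → Form
  deriving DecidableEq

/-- Kripke structures for BiInt -/
structure Kripke where
  W : Type
  le : W → W → Prop
  le_refl : ∀ w, le w w
  le_trans : ∀ u v w, le u v → le v w → le u w
  nonempty : Nonempty W
  I : W → Set ℕ
  mono : ∀ {w w'}, le w w' → I w ⊆ I w'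

/-- truth of a formula at a world -/
def Kripke.force (K : Kripke) : K.W → Form → Prop
  | w, .atom p => p ∈ K.I w
  | _, .top => True
  | _, .bot => False
  | w, .and A B => K.force w A ∧ K.force w B
  | w, .or A B => K.force w A ∨ K.force w B
  | w, .imp A B => ∀ w', K.le w w' → K.force w' A → K.force w' B
  | w, .excl A B => ∃ w', K.le w' w ∧ K.force w' A ∧ ¬ K.force w' B

/-- validity of a sequent -/
def SeqValid (Γ Δ : Multiset Form) : Prop :=
  ∀ (K : Kripke) (w : K.W), (∀ A ∈ Γ, K.force w A) → ∃ A ∈ Δ, K.force w A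

/-- The standard-style sequent calculus LBiI; the boolean parameter tells whether
the cut rule is allowed (`LD false` is cut-free LBiI). -/
inductive LD : Bool → Multiset Form → Multiset Form → Prop
  | hyp (b) (A : Form) (Γ Δ) : LD b (A ::ₘ Γ) (A ::ₘ Δ)
  | cut {Γ Δ} (A : Form) : LD true Γ (A ::ₘ Δ) → LD true (A ::ₘ Γ) Δ → LD true Γ Δ
  | weakL {b Γ Δ} (A : Form) : LD b Γ Δ → LD b (A ::ₘ Γ) Δ
  | weakR {b Γ Δ} (A : Form) : LD b Γ Δ → LD b Γ (A ::ₘ Δ)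
  | contrL {b Γ Δ} {A : Form} : LD b (A ::ₘ A ::ₘ Γ) Δ → LD b (A ::ₘ Γ) Δ
  | contrR {b Γ Δ} {A : Form} : LD b Γ (A ::ₘ A ::ₘ Δ) → LD b Γ (A ::ₘ Δ)
  | topL {b Γ Δ} : LD b Γ Δ → LD b (Form.top ::ₘ Γ) Δ
  | topR (b Γ Δ) : LD b Γ (Form.top ::ₘ Δ)
  | botL (b Γ Δ) : LD b (Form.bot ::ₘ Γ) Δ
  | botR {b Γ Δ} : LD b Γ Δ → LD b Γ (Form.bot ::ₘ Δ)
  | andL {b Γ Δ A B} : LD b (A ::ₘ B ::ₘ Γ) Δ → LD b (Form.and A B ::ₘ Γ) Δ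
  | andR {b Γ Δ A B} : LD b Γ (A ::ₘ Δ) → LD b Γ (B ::ₘ Δ) → LD b Γ (Form.and A B ::ₘ Δ)
  | orL {b Γ Δ A B} : LD b (A ::ₘ Γ) Δ → LD b (B ::ₘ Γ) Δ → LD b (Form.or A B ::ₘ Γ) Δ
  | orR {b Γ Δ A B} : LD b Γ (A ::ₘ B ::ₘ Δ) → LD b Γ (Form.or A B ::ₘ Δ)
  | impL {b Γ Δ A B} : LD b (Form.imp A B ::ₘ Γ) (A ::ₘ Δ) → LD b (B ::ₘ Γ) Δ →
      LD b (Form.imp A B ::ₘ Γ) Δ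
  | impR {b Γ Δ A B} : LD b (A ::ₘ Γ) {B} → LD b Γ (Form.imp A B ::ₘ Δ)
  | exclL {b Γ Δ A B} : LD b {A} (B ::ₘ Δ) → LD b (Form.excl A B ::ₘ Γ) Δ
  | exclR {b Γ Δ A B} : LD b Γ (A ::ₘ Δ) → LD b (B ::ₘ Γ) (Form.excl A B ::ₘ Δ) →
      LD b Γ (Form.excl A B ::ₘ Δ)

/-- members of nested contexts: formulas or nested sequents -/
inductive NForm : Type
  | fm : Form → NForm
  | seq : List NForm → List NForm → NForm

mutual
  /-- deep equality of nested-context members up to permutation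
  (nested contexts are multisets) -/
  inductive NEq : NForm → NForm → Prop
    | fm (A : Form) : NEq (.fm A) (.fm A)
    | seq {Γ Γ' Δ Δ'} : CEq Γ Γ' → CEq Δ Δ' → NEq (.seq Γ Δ) (.seq Γ' Δ')
  /-- equality of nested contexts as multisets -/
  inductive CEq : List NForm → List NForm → Prop
    | nil : CEq [] []
    | cons {a b Γ Γ'} : NEq a b → CEq Γ Γ' → CEq (a :: Γ) (b :: Γ')
    | swap (a b : NForm) (Γ : List NForm) : CEq (a :: b :: Γ) (b :: a :: Γ)
    | trans {Γ Γ' Γ''} : CEq Γ Γ' → CEq Γ' Γ'' → CEq Γ Γ''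
end

/-- The nested sequent calculus N-LBiI; the boolean parameter tells whether
the cut rule is allowed. Nested contexts are lists identified up to `CEq`
(i.e. multisets), so there is an explicit exchange rule. -/
inductive ND : Bool → List NForm → List NForm → Prop
  | exch {b Γ Γ' Δ Δ'} : CEq Γ Γ' → CEq Δ Δ' → ND b Γ Δ → ND b Γ' Δ'
  | hyp (b) (A : Form) (Γ Δ) : ND b (.fm A :: Γ) (.fm A :: Δ)
  | cut {Γ Δ} (A : Form) : ND true Γ (.fm A :: Δ) → ND true (.fm A :: Γ) Δ → ND true Γ Δ
  | weakL {b Γ Δ} (A : Form) : ND b Γ Δ → ND b (.fm A :: Γ) Δ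
  | weakR {b Γ Δ} (A : Form) : ND b Γ Δ → ND b Γ (.fm A :: Δ)
  | contrL {b Γ Δ} {A : Form} : ND b (.fm A :: .fm A :: Γ) Δ → ND b (.fm A :: Γ) Δ
  | contrR {b Γ Δ} {A : Form} : ND b Γ (.fm A :: .fm A :: Δ) → ND b Γ (.fm A :: Δ)
  | topL {b Γ Δ} : ND b Γ Δ → ND b (.fm .top :: Γ) Δ
  | topR (b Γ Δ) : ND b Γ (.fm .top :: Δ)
  | botL (b Γ Δ) : ND b (.fm .bot :: Γ) Δ
  | botR {b Γ Δ} : ND b Γ Δ → ND b Γ (.fm .bot :: Δ)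
  | andL {b Γ Δ A B} : ND b (.fm A :: .fm B :: Γ) Δ → ND b (.fm (.and A B) :: Γ) Δ
  | andR {b Γ Δ A B} : ND b Γ (.fm A :: Δ) → ND b Γ (.fm B :: Δ) → ND b Γ (.fm (.and A B) :: Δ)
  | orL {b Γ Δ A B} : ND b (.fm A :: Γ) Δ → ND b (.fm B :: Γ) Δ → ND b (.fm (.or A B) :: Γ) Δ
  | orR {b Γ Δ A B} : ND b Γ (.fm A :: .fm B :: Δ) → ND b Γ (.fm (.or A B) :: Δ)
  | impL {b Γ Δ A B} : ND b (.fm (.imp A B) :: Γ) (.fm A :: Δ) → ND b (.fm B :: Γ) Δ →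
      ND b (.fm (.imp A B) :: Γ) Δ
  | impR {b Γ Δ A B} : ND b (.fm A :: Γ) [.fm B] → ND b Γ (.fm (.imp A B) :: Δ)
  | exclL {b Γ Δ A B} : ND b [.fm A] (.fm B :: Δ) → ND b (.fm (.excl A B) :: Γ) Δ
  | exclR {b Γ Δ A B} : ND b Γ (.fm A :: Δ) → ND b (.fm B :: Γ) (.fm (.excl A B) :: Δ) →
      ND b Γ (.fm (.excl A B) :: Δ)
  | nestL {b Γ Δ Γ₀ Δ₀} : ND b Γ₀ (Δ₀ ++ Δ) → ND b (.seq Γ₀ Δ₀ :: Γ) Δ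
  | nestR {b Γ Δ Γ₀ Δ₀} : ND b (Γ ++ Γ₀) Δ₀ → ND b Γ (.seq Γ₀ Δ₀ :: Δ)
  | unnestL {b Γ Δ Γ₀ Δ₀} : ND b (.seq Γ₀ Δ₀ :: Γ) Δ → ND b (Γ₀ ++ Γ) (Δ₀ ++ Δ)
  | unnestR {b Γ Δ Γ₀ Δ₀} : ND b Γ (.seq Γ₀ Δ₀ :: Δ) → ND b (Γ₀ ++ Γ) (Δ₀ ++ Δ)


lemma force_mono (K : Kripke) {w w' : K.W} (h : K.le w w') :
    ∀ A, K.force w A → K.force w' A := by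
  intro A; induction A generalizing w w' with
  | atom p => exact fun hp => K.mono h hp
  | top => intro _; trivial
  | bot => exact id
  | and A B ihA ihB => exact fun ⟨ha, hb⟩ => ⟨ihA h ha, ihB h hb⟩
  | or A B ihA ihB => exact fun hx => hx.elim (fun ha => Or.inl (ihA h ha)) (fun hb => Or.inr (ihB h hb))
  | imp A B ihA ihB => exact fun hi w'' hle ha => hi w'' (K.le_trans _ _ _ h hle) ha
  | excl A B ihA ihB =>
      rintro ⟨u, hu, ha, hb⟩
      exact ⟨u, K.le_trans _ _ _ hu h, ha, hb⟩

/-- soundness of LBiI (with cut) -/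
theorem lbii_sound (Γ Δ : Multiset Form) (h : LD true Γ Δ) : SeqValid Γ Δ := by
  generalize hb : true = b at h
  clear hb
  induction h with
  | hyp b A Γ Δ =>
      intro K w hΓ
      exact ⟨A, Multiset.mem_cons_self _ _, hΓ A (Multiset.mem_cons_self _ _)⟩
  | cut A h1 h2 ih1 ih2 =>
      intro K w hΓ
      obtain ⟨C, hC, hfC⟩ := ih1 K w hΓ
      rcases Multiset.mem_cons.mp hC with rfl | hC
      · exact ih2 K w (by
          intro D hD
          rcases Multiset.mem_cons.mp hD with rfl | hD
          · exact hfC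
          · exact hΓ D hD)
      · exact ⟨C, hC, hfC⟩
  | weakL A h ih =>
      intro K w hΓ
      exact ih K w fun D hD => hΓ D (Multiset.mem_cons_of_mem hD)
  | weakR A h ih =>
      intro K w hΓ
      obtain ⟨C, hC, hfC⟩ := ih K w hΓ
      exact ⟨C, Multiset.mem_cons_of_mem hC, hfC⟩
  | contrL h ih =>
      intro K w hΓ
      refine ih K w ?_
      intro D hD
      rcases Multiset.mem_cons.mp hD with rfl | hD
      · exact hΓ D (Multiset.mem_cons_self _ _)
      · exact hΓ D hD
  | contrR h ih =>
      intro K w hΓ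
      obtain ⟨C, hC, hfC⟩ := ih K w hΓ
      rcases Multiset.mem_cons.mp hC with rfl | hC
      · exact ⟨C, Multiset.mem_cons_self _ _, hfC⟩
      · exact ⟨C, hC, hfC⟩
  | topL h ih =>
      intro K w hΓ
      exact ih K w fun D hD => hΓ D (Multiset.mem_cons_of_mem hD)
  | topR b Γ Δ =>
      intro K w _
      exact ⟨Form.top, Multiset.mem_cons_self _ _, trivial⟩
  | botL b Γ Δ =>
      intro K w hΓ
      exact absurd (hΓ Form.bot (Multiset.mem_cons_self _ _)) id
  | botR h ih =>
      intro K w hΓ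
      obtain ⟨C, hC, hfC⟩ := ih K w hΓ
      exact ⟨C, Multiset.mem_cons_of_mem hC, hfC⟩
  | andL h ih =>
      intro K w hΓ
      have hAB := hΓ _ (Multiset.mem_cons_self _ _)
      refine ih K w ?_
      intro D hD
      rcases Multiset.mem_cons.mp hD with rfl | hD
      · exact hAB.1
      rcases Multiset.mem_cons.mp hD with rfl | hD
      · exact hAB.2
      · exact hΓ D (Multiset.mem_cons_of_mem hD)
  | andR h1 h2 ih1 ih2 =>
      intro K w hΓ
      obtain ⟨C, hC, hfC⟩ := ih1 K w hΓ
      rcases Multiset.mem_cons.mp hC with rfl | hC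
      · obtain ⟨C', hC', hfC'⟩ := ih2 K w hΓ
        rcases Multiset.mem_cons.mp hC' with rfl | hC'
        · exact ⟨_, Multiset.mem_cons_self _ _, ⟨hfC, hfC'⟩⟩
        · exact ⟨C', Multiset.mem_cons_of_mem hC', hfC'⟩
      · exact ⟨C, Multiset.mem_cons_of_mem hC, hfC⟩
  | orL h1 h2 ih1 ih2 =>
      intro K w hΓ
      have hAB := hΓ _ (Multiset.mem_cons_self _ _)
      rcases hAB with hA | hB
      · refine ih1 K w ?_
        intro D hD
        rcases Multiset.mem_cons.mp hD with rfl | hD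
        · exact hA
        · exact hΓ D (Multiset.mem_cons_of_mem hD)
      · refine ih2 K w ?_
        intro D hD
        rcases Multiset.mem_cons.mp hD with rfl | hD
        · exact hB
        · exact hΓ D (Multiset.mem_cons_of_mem hD)
  | orR h ih =>
      intro K w hΓ
      obtain ⟨C, hC, hfC⟩ := ih K w hΓ
      rcases Multiset.mem_cons.mp hC with rfl | hC
      · exact ⟨_, Multiset.mem_cons_self _ _, Or.inl hfC⟩
      rcases Multiset.mem_cons.mp hC with rfl | hC
      · exact ⟨_, Multiset.mem_cons_self _ _, Or.inr hfC⟩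
      · exact ⟨C, Multiset.mem_cons_of_mem hC, hfC⟩
  | impL h1 h2 ih1 ih2 =>
      intro K w hΓ
      have himp := hΓ _ (Multiset.mem_cons_self _ _)
      obtain ⟨C, hC, hfC⟩ := ih1 K w hΓ
      rcases Multiset.mem_cons.mp hC with rfl | hC
      · have hB := himp w (K.le_refl w) hfC
        refine ih2 K w ?_
        intro D hD
        rcases Multiset.mem_cons.mp hD with rfl | hD
        · exact hB
        · exact hΓ D (Multiset.mem_cons_of_mem hD)
      · exact ⟨C, hC, hfC⟩
  | impR h ih =>
      intro K w hΓ
      refine ⟨_, Multiset.mem_cons_self _ _, ?_⟩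
      intro w' hle hA
      obtain ⟨C, hC, hfC⟩ := ih K w' (by
        intro D hD
        rcases Multiset.mem_cons.mp hD with rfl | hD
        · exact hA
        · exact force_mono K hle D (hΓ D hD))
      rcases Multiset.mem_singleton.mp hC with rfl
      exact hfC
  | exclL h ih =>
      intro K w hΓ
      obtain ⟨w', hle, hA, hB⟩ := hΓ _ (Multiset.mem_cons_self _ _)
      obtain ⟨C, hC, hfC⟩ := ih K w' (by
        intro D hD
        rcases Multiset.mem_singleton.mp hD with rfl
        exact hA)
      rcases Multiset.mem_cons.mp hC with rfl | hC
      · exact absurd hfC hB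
      · exact ⟨C, hC, force_mono K hle C hfC⟩
  | @exclR b' Γ' Δ' A B h1 h2 ih1 ih2 =>
      intro K w hΓ
      obtain ⟨C, hC, hfC⟩ := ih1 K w hΓ
      rcases Multiset.mem_cons.mp hC with rfl | hC
      · by_cases hB : K.force w B
        · obtain ⟨C', hC', hfC'⟩ := ih2 K w (by
            intro D hD
            rcases Multiset.mem_cons.mp hD with rfl | hD
            · exact hB
            · exact hΓ D hD)
          exact ⟨C', hC', hfC'⟩
        · exact ⟨_, Multiset.mem_cons_self _ _, ⟨w, K.le_refl w, hfC, hB⟩⟩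
      · exact ⟨C, Multiset.mem_cons_of_mem hC, hfC⟩
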